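/- arXiv:1305.7510 — 2 statements merged into one kernel-verified Lean document; each statement's English description precedes it below -/
import Mathlib

section
/- For every fixed q ≥ 0, the function x ↦ V_q'(x)/(x·V_q(x)) is strictly increasing on (0,∞). -/
open Real MeasureTheory Set Filter Metric

/-- The one-dimensional regularization of the Coulomb potential:
`V q x = (2 e^{x²} / Γ(q+1)) ∫_x^∞ e^{-t²} (t² - x²)^q dt`. -/
noncomputable def V (q x : ℝ) : ℝ :=
  (2 * Real.exp (x ^ 2) / Real.Gamma (q + 1)) *
    ∫ t in Set.Ioi x, Real.exp (-t ^ 2) * (t ^ 2 - x ^ 2) ^ q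

namespace CoulombAux

noncomputable def phi (q s : ℝ) : ℝ := Real.exp (-s ^ 2) * s ^ (2 * q + 1)

noncomputable def J (q k x : ℝ) : ℝ :=
  ∫ s in Ioi (0 : ℝ), phi q s * (x ^ 2 + s ^ 2) ^ (-k / 2)

lemma phi_pos {q s : ℝ} (hs : 0 < s) : 0 < phi q s :=
  mul_pos (Real.exp_pos _) (Real.rpow_pos_of_pos hs _)

lemma phi_integrable {q : ℝ} (hq : 0 ≤ q) : IntegrableOn (phi q) (Ioi 0) := by
  have h := integrableOn_rpow_mul_exp_neg_mul_sq (b := 1) one_pos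
    (s := 2 * q + 1) (by linarith)
  refine h.congr_fun (fun s _ => ?_) measurableSet_Ioi
  simp [phi, mul_comm]

lemma base_pos {x s : ℝ} (hx : 0 < x) : 0 < x ^ 2 + s ^ 2 := by positivity

lemma phi_measurable {q : ℝ} :
    AEStronglyMeasurable (phi q) (volume.restrict (Ioi 0)) := by
  refine ContinuousOn.aestronglyMeasurable (fun s hs => ?_) measurableSet_Ioi
  exact ((Real.continuous_exp.comp (continuous_pow 2).neg).continuousAt.continuousWithinAt.mul
    ((Real.continuousAt_rpow_const s _ (Or.inl (ne_of_gt hs))).continuousWithinAt))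

lemma J_cont {q k x : ℝ} (hx : 0 < x) :
    ContinuousOn (fun s : ℝ => phi q s * (x ^ 2 + s ^ 2) ^ (-k / 2)) (Ioi 0) := by
  intro s hs
  have h1 : ContinuousAt (phi q) s :=
    ((Real.continuous_exp.comp (continuous_pow 2).neg).continuousAt.mul
      (Real.continuousAt_rpow_const s _ (Or.inl (ne_of_gt hs))))
  have h2 : ContinuousAt (fun s : ℝ => (x ^ 2 + s ^ 2) ^ (-k / 2)) s := by
    apply ContinuousAt.rpow_const
    · exact (continuous_const.add (continuous_pow 2)).continuousAt
    · exact Or.inl (ne_of_gt (base_pos hx))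
  exact (h1.mul h2).continuousWithinAt

lemma J_integrableOn {q k x : ℝ} (hq : 0 ≤ q) (hk : 0 ≤ k) (hx : 0 < x) :
    IntegrableOn (fun s : ℝ => phi q s * (x ^ 2 + s ^ 2) ^ (-k / 2)) (Ioi 0) := by
  refine Integrable.mono' ((phi_integrable hq).const_mul ((x ^ 2) ^ (-k / 2)))
    ((J_cont hx).aestronglyMeasurable measurableSet_Ioi) ?_
  filter_upwards [ae_restrict_mem measurableSet_Ioi] with s hs
  have hφ : 0 < phi q s := phi_pos hs
  have hb : (x ^ 2 + s ^ 2) ^ (-k / 2) ≤ (x ^ 2) ^ (-k / 2) :=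
    Real.rpow_le_rpow_of_nonpos (by positivity) (by nlinarith) (by linarith)
  have hb0 : (0:ℝ) ≤ (x ^ 2 + s ^ 2) ^ (-k / 2) := (Real.rpow_pos_of_pos (base_pos hx) _).le
  rw [Real.norm_eq_abs, abs_of_nonneg (by positivity)]
  calc phi q s * (x ^ 2 + s ^ 2) ^ (-k / 2) ≤ phi q s * (x ^ 2) ^ (-k / 2) := by
        exact mul_le_mul_of_nonneg_left hb hφ.le
    _ = (x ^ 2) ^ (-k / 2) * phi q s := mul_comm _ _

lemma J_pos {q k x : ℝ} (hq : 0 ≤ q) (hk : 0 ≤ k) (hx : 0 < x) : 0 < J q k x := by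
  rw [J, setIntegral_pos_iff_support_of_nonneg_ae]
  · have : Ioi (0:ℝ) ⊆ Function.support fun s => phi q s * (x ^ 2 + s ^ 2) ^ (-k / 2) := by
      intro s hs
      exact (mul_pos (phi_pos hs) (Real.rpow_pos_of_pos (base_pos hx) _)).ne'
    refine lt_of_lt_of_le ?_ (measure_mono (inter_subset_inter_left _ this))
    simp [Set.inter_self]
  · filter_upwards [ae_restrict_mem measurableSet_Ioi] with s hs
    exact (mul_pos (phi_pos hs) (Real.rpow_pos_of_pos (base_pos hx) _)).le
  · exact J_integrableOn hq hk hx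


variable {q k x : ℝ}

lemma deriv_inner (hx : 0 < x) {s y : ℝ} (hs : 0 < s) (hy : 0 < y) :
    HasDerivAt (fun z : ℝ => phi q s * (z ^ 2 + s ^ 2) ^ (-k / 2))
      (phi q s * (-k * y * (y ^ 2 + s ^ 2) ^ (-(k + 2) / 2))) y := by
  have h1 : HasDerivAt (fun z : ℝ => z ^ 2 + s ^ 2) (2 * y) y := by
    simpa using (hasDerivAt_pow 2 y).add_const (s ^ 2)
  have h2 : HasDerivAt (fun z : ℝ => (z ^ 2 + s ^ 2) ^ (-k / 2))
      (2 * y * (-k / 2) * (y ^ 2 + s ^ 2) ^ (-k / 2 - 1)) y :=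
    h1.rpow_const (Or.inl (ne_of_gt (base_pos hy)))
  have h3 := h2.const_mul (phi q s)
  refine h3.congr_deriv ?_
  have : -k / 2 - 1 = -(k + 2) / 2 := by ring
  rw [this]; ring

lemma J_hasDerivAt (hq : 0 ≤ q) (hk : 0 ≤ k) (hx : 0 < x) :
    HasDerivAt (fun y => J q k y) (-k * x * J q (k + 2) x) x := by
  set C : ℝ := (k + 2) * (2 * x) * ((x / 2) ^ 2) ^ (-(k + 2) / 2) with hC
  have main := hasDerivAt_integral_of_dominated_loc_of_deriv_le
      (F := fun y s => phi q s * (y ^ 2 + s ^ 2) ^ (-k / 2))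
      (F' := fun y s => phi q s * (-k * y * (y ^ 2 + s ^ 2) ^ (-(k + 2) / 2)))
      (x₀ := x) (bound := fun s => C * phi q s)
      (μ := volume.restrict (Ioi 0)) (ball_mem_nhds x (half_pos hx))
      ?_ (J_integrableOn hq hk hx) ?_ ?_ ?_ ?_
  · have h2 : (∫ s in Ioi (0:ℝ), phi q s * (-k * x * (x ^ 2 + s ^ 2) ^ (-(k + 2) / 2)))
        = -k * x * J q (k + 2) x := by
      rw [J, ← integral_const_mul]
      congr 1; ext s; ring
    rw [← h2]; exact main.2
  · filter_upwards [eventually_mem_nhds_iff.mpr (Ioi_mem_nhds hx)] with y hy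
    exact ((J_cont (mem_of_mem_nhds hy : y ∈ Ioi 0)).aestronglyMeasurable measurableSet_Ioi)
  · refine ContinuousOn.aestronglyMeasurable (fun s hs => ?_) measurableSet_Ioi
    have := (J_cont (q := q) (k := k + 2) (x := x) hx) s hs
    have h1 : ContinuousWithinAt (phi q) (Ioi 0) s :=
      ((Real.continuous_exp.comp (continuous_pow 2).neg).continuousAt.mul
        (Real.continuousAt_rpow_const s _ (Or.inl (ne_of_gt hs)))).continuousWithinAt
    have h2 : ContinuousWithinAt (fun s : ℝ => (x ^ 2 + s ^ 2) ^ (-(k + 2) / 2)) (Ioi 0) s :=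
      (ContinuousAt.rpow_const ((continuous_const.add (continuous_pow 2)).continuousAt)
        (Or.inl (ne_of_gt (base_pos hx)))).continuousWithinAt
    exact h1.mul ((continuousWithinAt_const.mul continuousWithinAt_const).mul h2) |>.congr
      (fun t ht => rfl) rfl
  · filter_upwards [ae_restrict_mem measurableSet_Ioi] with s hs y hy
    rw [mem_ball, Real.dist_eq, abs_lt] at hy
    have hy1 : x / 2 < y := by linarith
    have hy2 : y < 2 * x := by linarith
    have hy0 : 0 < y := lt_trans (half_pos hx) hy1
    have hbase : (x / 2) ^ 2 ≤ y ^ 2 + s ^ 2 := by nlinarith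
    have hb : (y ^ 2 + s ^ 2) ^ (-(k + 2) / 2) ≤ ((x / 2) ^ 2) ^ (-(k + 2) / 2) :=
      Real.rpow_le_rpow_of_nonpos (by positivity) hbase (by linarith)
    have hφ := (phi_pos hs (q := q)).le
    rw [Real.norm_eq_abs, abs_mul, abs_of_nonneg hφ, abs_mul, abs_mul,
      abs_of_nonneg (Real.rpow_pos_of_pos (base_pos hy0) _).le]
    have h1 : |(-k)| * |y| ≤ (k + 2) * (2 * x) := by
      rw [abs_neg, abs_of_nonneg hk, abs_of_nonneg hy0.le]
      have : y ≤ 2 * x := hy2.le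
      nlinarith
    calc phi q s * (|(-k)| * |y| * (y ^ 2 + s ^ 2) ^ (-(k + 2) / 2))
        ≤ phi q s * ((k + 2) * (2 * x) * ((x / 2) ^ 2) ^ (-(k + 2) / 2)) := by
          refine mul_le_mul_of_nonneg_left ?_ hφ
          refine mul_le_mul h1 hb (Real.rpow_pos_of_pos (base_pos hy0) _).le (by positivity)
      _ = C * phi q s := by rw [hC]; ring
  · have hphi : IntegrableOn (phi q) (Ioi 0) := by
      have h := integrableOn_rpow_mul_exp_neg_mul_sq (b := 1) one_pos
        (s := 2 * q + 1) (by linarith)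
      refine h.congr_fun (fun s _ => ?_) measurableSet_Ioi
      simp [phi, mul_comm]
    exact hphi.const_mul C
  · filter_upwards [ae_restrict_mem measurableSet_Ioi] with s hs y hy
    rw [mem_ball, Real.dist_eq, abs_lt] at hy
    have hy0 : 0 < y := by linarith
    exact deriv_inner hx hs hy0

lemma image_sqrt (hx : 0 < x) :
    (fun t : ℝ => Real.sqrt (t ^ 2 - x ^ 2)) '' Ioi x = Ioi 0 := by
  ext y
  constructor
  · rintro ⟨t, ht, rfl⟩
    have : 0 < t ^ 2 - x ^ 2 := by nlinarith [mem_Ioi.mp ht]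
    exact Real.sqrt_pos.mpr this
  · intro hy
    refine ⟨Real.sqrt (x ^ 2 + y ^ 2), ?_, ?_⟩
    · exact mem_Ioi.mpr ((Real.lt_sqrt hx.le).mpr (by nlinarith [mem_Ioi.mp hy]))
    · show Real.sqrt (Real.sqrt (x ^ 2 + y ^ 2) ^ 2 - x ^ 2) = y
      rw [Real.sq_sqrt (by positivity), show x ^ 2 + y ^ 2 - x ^ 2 = y ^ 2 by ring,
        Real.sqrt_sq (mem_Ioi.mp hy).le]

lemma V_eq (hq : 0 ≤ q) (hx : 0 < x) :
    V q x = (2 / Real.Gamma (q + 1)) * J q 1 x := by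
  have hderiv : ∀ t ∈ Ioi x, HasDerivWithinAt (fun t : ℝ => Real.sqrt (t ^ 2 - x ^ 2))
      (t / Real.sqrt (t ^ 2 - x ^ 2)) (Ioi x) t := by
    intro t ht
    have htx : 0 < t ^ 2 - x ^ 2 := by nlinarith [mem_Ioi.mp ht]
    have h1 : HasDerivAt (fun t : ℝ => t ^ 2 - x ^ 2) (2 * t) t := by
      simpa using (hasDerivAt_pow 2 t).sub_const (x ^ 2)
    have h2 := h1.sqrt htx.ne'
    have : 2 * t / (2 * Real.sqrt (t ^ 2 - x ^ 2)) = t / Real.sqrt (t ^ 2 - x ^ 2) := by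
      rw [mul_div_mul_left _ _ (two_ne_zero)]
    rw [this] at h2
    exact h2.hasDerivWithinAt
  have hinj : InjOn (fun t : ℝ => Real.sqrt (t ^ 2 - x ^ 2)) (Ioi x) := by
    have : StrictMonoOn (fun t : ℝ => Real.sqrt (t ^ 2 - x ^ 2)) (Ioi x) := by
      intro a ha b hb hab
      have ha' := mem_Ioi.mp ha
      have hb' := mem_Ioi.mp hb
      exact Real.sqrt_lt_sqrt (by nlinarith) (by nlinarith)
    exact this.injOn
  have key := integral_image_eq_integral_abs_deriv_smul measurableSet_Ioi hderiv hinj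
    (fun s => phi q s * (x ^ 2 + s ^ 2) ^ (-(1:ℝ) / 2))
  rw [image_sqrt hx] at key
  have hptw : ∀ t ∈ Ioi x,
      |t / Real.sqrt (t ^ 2 - x ^ 2)| •
        (phi q (Real.sqrt (t ^ 2 - x ^ 2)) *
          (x ^ 2 + Real.sqrt (t ^ 2 - x ^ 2) ^ 2) ^ (-(1:ℝ) / 2))
      = Real.exp (x ^ 2) * (Real.exp (-t ^ 2) * (t ^ 2 - x ^ 2) ^ q) := by
    intro t ht
    have ht' := mem_Ioi.mp ht
    have ht0 : 0 < t := lt_trans hx ht'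
    have htx : 0 < t ^ 2 - x ^ 2 := by nlinarith
    have hsq : Real.sqrt (t ^ 2 - x ^ 2) ^ 2 = t ^ 2 - x ^ 2 := Real.sq_sqrt htx.le
    rw [smul_eq_mul, hsq, abs_of_nonneg (by positivity), phi]
    have h1 : x ^ 2 + (t ^ 2 - x ^ 2) = t ^ 2 := by ring
    rw [h1]
    have h2 : (t ^ 2 : ℝ) ^ (-(1:ℝ) / 2) = t⁻¹ := by
      rw [← Real.rpow_natCast t 2, ← Real.rpow_mul ht0.le]
      norm_num
      exact (Real.rpow_neg_one t) ▸ by rw [Real.rpow_neg ht0.le, Real.rpow_one]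
    have h3 : Real.sqrt (t ^ 2 - x ^ 2) ^ (2 * q + 1)
        = (t ^ 2 - x ^ 2) ^ (q + 1 / 2 : ℝ) := by
      rw [Real.sqrt_eq_rpow, ← Real.rpow_mul htx.le]
      ring_nf
    have h4 : Real.exp (-(t ^ 2 - x ^ 2)) = Real.exp (x ^ 2) * Real.exp (-t ^ 2) := by
      rw [← Real.exp_add]; ring_nf
    rw [hsq, h3, h4, h2]
    have h5 : (t ^ 2 - x ^ 2) ^ (q + 1 / 2 : ℝ) = (t ^ 2 - x ^ 2) ^ q * (t ^ 2 - x ^ 2) ^ (1 / 2 : ℝ) := by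
      rw [← Real.rpow_add htx]
    have h6 : Real.sqrt (t ^ 2 - x ^ 2) = (t ^ 2 - x ^ 2) ^ (1 / 2 : ℝ) := Real.sqrt_eq_rpow _
    rw [h5, h6]
    have h7 : ((t ^ 2 - x ^ 2) ^ (1 / 2 : ℝ)) ≠ 0 := by
      positivity
    field_simp
  have key2 : J q 1 x = Real.exp (x ^ 2) * ∫ t in Ioi x, Real.exp (-t ^ 2) * (t ^ 2 - x ^ 2) ^ q := by
    rw [J]
    have : ∀ s ∈ Ioi (0:ℝ), phi q s * (x ^ 2 + s ^ 2) ^ (-(1:ℝ) / 2)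
        = phi q s * (x ^ 2 + s ^ 2) ^ (-(1:ℝ) / 2) := fun _ _ => rfl
    rw [show (∫ s in Ioi (0 : ℝ), phi q s * (x ^ 2 + s ^ 2) ^ (-(1:ℝ) / 2)) =
      ∫ t in Ioi x, |t / Real.sqrt (t ^ 2 - x ^ 2)| •
        (phi q (Real.sqrt (t ^ 2 - x ^ 2)) *
          (x ^ 2 + Real.sqrt (t ^ 2 - x ^ 2) ^ 2) ^ (-(1:ℝ) / 2)) from key]
    rw [setIntegral_congr_fun measurableSet_Ioi hptw, integral_const_mul]
  rw [V, key2]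
  ring

lemma J_sq_le (hq : 0 ≤ q) (hx : 0 < x) :
    (J q 3 x) ^ 2 ≤ J q 5 x * J q 1 x := by
  have h1 := J_pos hq (by norm_num : (0:ℝ) ≤ 1) hx
  have h5 := J_pos hq (by norm_num : (0:ℝ) ≤ 5) hx
  have h3 := J_pos hq (by norm_num : (0:ℝ) ≤ 3) hx
  set l : ℝ := Real.sqrt (J q 1 x / J q 5 x) with hl
  have hl0 : 0 < l := Real.sqrt_pos.mpr (by positivity)
  have hl2 : l ^ 2 = J q 1 x / J q 5 x := Real.sq_sqrt (by positivity)
  -- pointwise AM-GM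
  have key : J q 3 x ≤ (l * J q 5 x + J q 1 x / l) / 2 := by
    have hint : ∀ k' : ℝ, 0 ≤ k' → IntegrableOn
        (fun s : ℝ => phi q s * (x ^ 2 + s ^ 2) ^ (-k' / 2)) (Ioi 0) :=
      fun k' hk' => J_integrableOn hq hk' hx
    have hRHS : IntegrableOn (fun s : ℝ =>
        (l * (phi q s * (x ^ 2 + s ^ 2) ^ (-(5:ℝ) / 2))
          + (phi q s * (x ^ 2 + s ^ 2) ^ (-(1:ℝ) / 2)) / l) / 2) (Ioi 0) := by
      exact (((hint 5 (by norm_num)).const_mul l).add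
        ((hint 1 (by norm_num)).div_const l)).div_const 2
    have hmono := setIntegral_mono_on (hint 3 (by norm_num)) hRHS measurableSet_Ioi ?_
    · rw [J]
      refine le_trans hmono (le_of_eq ?_)
      rw [integral_div, integral_add (((hint 5 (by norm_num)).const_mul l))
        ((hint 1 (by norm_num)).div_const l), integral_const_mul, integral_div]
      rfl
    · intro s hs
      have hG : 0 < (x ^ 2 + s ^ 2) ^ (-(1:ℝ) / 2) := Real.rpow_pos_of_pos (base_pos hx) _
      set G : ℝ := (x ^ 2 + s ^ 2) ^ (-(1:ℝ) / 2) with hG'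
      have e3 : (x ^ 2 + s ^ 2) ^ (-(3:ℝ) / 2) = G ^ 3 := by
        rw [hG', ← Real.rpow_natCast ((x ^ 2 + s ^ 2) ^ (-(1:ℝ)/2)) 3,
          ← Real.rpow_mul (base_pos hx).le]
        norm_num
      have e5 : (x ^ 2 + s ^ 2) ^ (-(5:ℝ) / 2) = G ^ 5 := by
        rw [hG', ← Real.rpow_natCast ((x ^ 2 + s ^ 2) ^ (-(1:ℝ)/2)) 5,
          ← Real.rpow_mul (base_pos hx).le]
        norm_num
      rw [e3, e5]
      have hφ := (phi_pos (q := q) hs).le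
      rw [le_div_iff₀ (by norm_num : (0:ℝ) < 2), ← mul_le_mul_iff_right₀ hl0]
      have hll : l * (l * (phi q s * G ^ 5) + phi q s * G / l)
          = l ^ 2 * (phi q s * G ^ 5) + phi q s * G := by
        field_simp
      rw [hll]
      nlinarith [mul_nonneg (mul_nonneg hφ hG.le) (sq_nonneg (l * G ^ 2 - 1))]
  -- from key derive the squared inequality
  have h2 : J q 3 x * l ≤ (l ^ 2 * J q 5 x + J q 1 x) / 2 := by
    have := mul_le_mul_of_nonneg_right key hl0.le
    calc J q 3 x * l ≤ (l * J q 5 x + J q 1 x / l) / 2 * l := this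
      _ = (l ^ 2 * J q 5 x + J q 1 x) / 2 := by field_simp
  rw [hl2] at h2
  have h2' : J q 3 x * l ≤ J q 1 x := by
    calc J q 3 x * l ≤ (J q 1 x / J q 5 x * J q 5 x + J q 1 x) / 2 := h2
      _ = J q 1 x := by field_simp; norm_num
  have hJ1 : J q 1 x / l = l * J q 5 x := by
    have : J q 1 x = l ^ 2 * J q 5 x := by rw [hl2]; field_simp
    rw [this]; field_simp
  have h3' : J q 3 x ≤ l * J q 5 x := by
    rw [hJ1] at key; linarith
  calc (J q 3 x) ^ 2 = J q 3 x * J q 3 x := sq (J q 3 x) ▸ by ring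
    _ ≤ (l * J q 5 x) * J q 3 x := by nlinarith
    _ = J q 5 x * (J q 3 x * l) := by ring
    _ ≤ J q 5 x * J q 1 x := by nlinarith


theorem main (q : ℝ) (hq : 0 ≤ q) :
    StrictMonoOn (fun x => deriv (V q) x / (x * V q x)) (Set.Ioi (0 : ℝ)) := by
  set c : ℝ := 2 / Real.Gamma (q + 1) with hc
  have hΓ : 0 < Real.Gamma (q + 1) := Real.Gamma_pos_of_pos (by linarith)
  have hc0 : 0 < c := by positivity
  set h : ℝ → ℝ := fun x => -(J q 3 x) / J q 1 x with hh
  have hd3 : ∀ {x : ℝ}, 0 < x → HasDerivAt (fun y => J q 3 y) (-3 * x * J q 5 x) x := by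
    intro x hx
    have := J_hasDerivAt hq (by norm_num : (0:ℝ) ≤ 3) hx
    norm_num at this ⊢
    exact this
  have hd1 : ∀ {x : ℝ}, 0 < x → HasDerivAt (fun y => J q 1 y) (-x * J q 3 x) x := by
    intro x hx
    have := J_hasDerivAt hq (by norm_num : (0:ℝ) ≤ 1) hx
    norm_num at this ⊢
    exact this
  have hmono : StrictMonoOn h (Set.Ioi 0) := by
    apply strictMonoOn_of_deriv_pos (convex_Ioi 0)
    · intro x hx
      have hx' := mem_Ioi.mp hx
      have hJ1 := J_pos hq (by norm_num : (0:ℝ) ≤ 1) hx'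
      exact (((hd3 hx').neg.div (hd1 hx') hJ1.ne').continuousAt).continuousWithinAt
    · intro x hx
      rw [interior_Ioi] at hx
      have hx' := mem_Ioi.mp hx
      have hJ1 := J_pos hq (by norm_num : (0:ℝ) ≤ 1) hx'
      have hJ5 := J_pos hq (by norm_num : (0:ℝ) ≤ 5) hx'
      have hCS := J_sq_le hq hx'
      have hDA : HasDerivAt h
          ((-(-3 * x * J q 5 x) * J q 1 x - -(J q 3 x) * (-x * J q 3 x)) / J q 1 x ^ 2) x :=
        (hd3 hx').neg.div (hd1 hx') hJ1.ne'
      rw [hh, hDA.deriv]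
      have hnum : -(-3 * x * J q 5 x) * J q 1 x - -(J q 3 x) * (-x * J q 3 x)
          = x * (3 * (J q 5 x * J q 1 x) - J q 3 x ^ 2) := by ring
      rw [hnum]
      have : 0 < 3 * (J q 5 x * J q 1 x) - J q 3 x ^ 2 := by nlinarith [mul_pos hJ5 hJ1]
      positivity
  refine hmono.congr fun x hx => ?_
  have hx' := mem_Ioi.mp hx
  have hJ1 := J_pos hq (by norm_num : (0:ℝ) ≤ 1) hx'
  have hVd : deriv (V q) x = c * (-x * J q 3 x) := by
    have hev : V q =ᶠ[nhds x] fun y => c * J q 1 y := by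
      filter_upwards [Ioi_mem_nhds hx'] with y hy
      exact V_eq hq (mem_Ioi.mp hy)
    rw [hev.deriv_eq]
    exact (((hd1 hx').const_mul c).deriv)
  rw [hh]
  show -(J q 3 x) / J q 1 x = deriv (V q) x / (x * V q x)
  rw [hVd, V_eq hq hx']
  rw [div_eq_div_iff hJ1.ne' (by positivity : x * (2 / Real.Gamma (q + 1) * J q 1 x) ≠ 0)]
  ring

end CoulombAux

theorem stmt_3 (q : ℝ) (hq : 0 ≤ q) :
    StrictMonoOn (fun x => deriv (V q) x / (x * V q x)) (Set.Ioi (0 : ℝ)) :=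
  CoulombAux.main q hq
end

section
/- For every q > -1 and all x, y > 0 with x ≠ y, one has (V_q(x) + V_q(y))/2 < V_q(2xy/(x + y)); that is, V_q is strictly concave with respect to the harmonic mean in the argument and the arithmetic mean in the value. -/
set_option maxHeartbeats 1000000

open Real MeasureTheory Set

lemma Wi_contOn (q x : ℝ) :
    ContinuousOn (fun s => Real.exp (-s) * s ^ q / Real.sqrt (s + x ^ 2)) (Ioi 0) := by
  apply ContinuousOn.div
  · exact ((Real.continuous_exp.comp continuous_neg).continuousOn).mul
      (continuousOn_id.rpow_const fun s hs => Or.inl (ne_of_gt hs))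
  · exact (Real.continuous_sqrt.comp (continuous_id.add continuous_const)).continuousOn
  · intro s hs
    have hs0 : (0:ℝ) < s := hs
    exact ne_of_gt (Real.sqrt_pos.mpr (by positivity))

lemma Wi_integrable (q : ℝ) (hq : -1 < q) {x : ℝ} (hx : 0 < x) :
    IntegrableOn (fun s => Real.exp (-s) * s ^ q / Real.sqrt (s + x ^ 2)) (Ioi 0) := by
  have hG : IntegrableOn (fun s => Real.exp (-s) * s ^ q) (Ioi 0) := by
    have := Real.GammaIntegral_convergent (s := q + 1) (by linarith)
    simpa using this
  refine Integrable.mono' (hG.mul_const (1 / x)) ?_ ?_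
  · exact (Wi_contOn q x).aestronglyMeasurable measurableSet_Ioi
  · filter_upwards [ae_restrict_mem measurableSet_Ioi] with s hs
    have hs0 : (0:ℝ) < s := hs
    have h1 : (0:ℝ) ≤ Real.exp (-s) * s ^ q := by positivity
    have h2 : x ≤ Real.sqrt (s + x ^ 2) :=
      (Real.le_sqrt hx.le (by positivity)).mpr (by linarith)
    have h3 : (0:ℝ) < Real.sqrt (s + x ^ 2) := lt_of_lt_of_le hx h2
    rw [Real.norm_eq_abs, abs_of_nonneg (by positivity), div_eq_mul_inv]
    apply mul_le_mul_of_nonneg_left _ h1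
    rw [one_div]
    exact inv_anti₀ hx h2

lemma V_eq (q : ℝ) {x : ℝ} (hx : 0 < x) :
    V q x = (1 / Real.Gamma (q + 1)) *
      ∫ s in Ioi 0, Real.exp (-s) * s ^ q / Real.sqrt (s + x ^ 2) := by
  have himg : (fun s => Real.sqrt (s + x ^ 2)) '' (Ioi 0) = Ioi x := by
    ext t
    constructor
    · rintro ⟨s, hs, rfl⟩
      have hs0 : (0:ℝ) < s := hs
      exact (Real.lt_sqrt (by positivity)).mpr (by linarith)
    · intro ht
      have htx : x < t := ht
      have ht0 : 0 < t := hx.trans htx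
      refine ⟨t ^ 2 - x ^ 2, by simp only [mem_Ioi]; nlinarith, ?_⟩
      show Real.sqrt (t ^ 2 - x ^ 2 + x ^ 2) = t
      rw [show t ^ 2 - x ^ 2 + x ^ 2 = t ^ 2 by ring, Real.sqrt_sq ht0.le]
  have hderiv : ∀ s ∈ Ioi (0:ℝ), HasDerivWithinAt (fun s => Real.sqrt (s + x ^ 2))
      (1 / (2 * Real.sqrt (s + x ^ 2))) (Ioi 0) s := by
    intro s hs
    have hs0 : (0:ℝ) < s := hs
    have h1 : HasDerivAt (fun s : ℝ => s + x ^ 2) 1 s := by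
      simpa using (hasDerivAt_id s).add_const (x ^ 2)
    have := (Real.hasDerivAt_sqrt (by positivity : s + x ^ 2 ≠ 0)).comp s h1
    simpa [Function.comp_def] using this.hasDerivWithinAt
  have hinj : InjOn (fun s => Real.sqrt (s + x ^ 2)) (Ioi 0) := by
    intro a ha b hb h
    have ha0 : (0:ℝ) < a := ha
    have hb0 : (0:ℝ) < b := hb
    have := (Real.sqrt_inj (by positivity) (by positivity)).mp h
    linarith
  have key := integral_image_eq_integral_abs_deriv_smul measurableSet_Ioi hderiv hinj
    (fun t => Real.exp (-t ^ 2) * (t ^ 2 - x ^ 2) ^ q)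
  rw [himg] at key
  simp only [smul_eq_mul] at key
  have hcong : EqOn
      (fun s => |1 / (2 * Real.sqrt (s + x ^ 2))| *
        (Real.exp (-Real.sqrt (s + x ^ 2) ^ 2) * (Real.sqrt (s + x ^ 2) ^ 2 - x ^ 2) ^ q))
      (fun s => (Real.exp (-x ^ 2) / 2) * (Real.exp (-s) * s ^ q / Real.sqrt (s + x ^ 2)))
      (Ioi 0) := by
    intro s hs
    have hs0 : (0:ℝ) < s := hs
    have hsq : Real.sqrt (s + x ^ 2) ^ 2 = s + x ^ 2 := Real.sq_sqrt (by positivity)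
    have h2 : (0:ℝ) < Real.sqrt (s + x ^ 2) := Real.sqrt_pos.mpr (by positivity)
    have e2 : |1 / (2 * Real.sqrt (s + x ^ 2))| = 1 / (2 * Real.sqrt (s + x ^ 2)) :=
      abs_of_pos (by positivity)
    show |1 / (2 * Real.sqrt (s + x ^ 2))| *
        (Real.exp (-Real.sqrt (s + x ^ 2) ^ 2) * (Real.sqrt (s + x ^ 2) ^ 2 - x ^ 2) ^ q)
      = (Real.exp (-x ^ 2) / 2) * (Real.exp (-s) * s ^ q / Real.sqrt (s + x ^ 2))
    rw [e2, hsq, show s + x ^ 2 - x ^ 2 = s by ring,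
      show -(s + x ^ 2) = -s + -x ^ 2 by ring, Real.exp_add]
    field_simp
  rw [setIntegral_congr_fun measurableSet_Ioi hcong, integral_const_mul] at key
  have e1 : Real.exp (x ^ 2) * Real.exp (-x ^ 2) = 1 := by
    rw [← Real.exp_add]; simp
  unfold V
  rw [key]
  linear_combination ((∫ s in Ioi 0, Real.exp (-s) * s ^ q / Real.sqrt (s + x ^ 2)) /
      Real.Gamma (q + 1)) * e1

lemma key_ineq {s x y a b c : ℝ} (hs : 0 < s) (hx : 0 < x) (hy : 0 < y) (hxy : x ≠ y)
    (ha0 : 0 < a) (hb0 : 0 < b) (hc0 : 0 < c)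
    (ha : a ^ 2 = s + x ^ 2) (hb : b ^ 2 = s + y ^ 2)
    (h1 : c ^ 2 * (x + y) ^ 2 = s * (x + y) ^ 2 + 4 * x ^ 2 * y ^ 2) :
    c * (a + b) < 2 * (a * b) := by
  have hδ : 0 < (x - y) ^ 2 := by
    have : x - y ≠ 0 := sub_ne_zero.mpr hxy
    positivity
  have hL : 0 < s + x * y := by positivity
  have hP : (0:ℝ) < (x + y) ^ 2 := by positivity
  have h2 : (s + x * y - c ^ 2) * (x + y) ^ 2 = x * y * (x - y) ^ 2 := by
    linear_combination (-1 : ℝ) * h1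
  have hcL : c ^ 2 ≤ s + x * y := by
    nlinarith [h2, mul_nonneg (mul_nonneg hx.le hy.le) hδ.le, hP]
  have hp : (a * b) ^ 2 = (s + x * y) ^ 2 + s * (x - y) ^ 2 := by
    rw [mul_pow, ha, hb]; ring
  have hp0 : 0 < a * b := mul_pos ha0 hb0
  have hub : 2 * (a * b) * (s + x * y) ≤ 2 * (s + x * y) ^ 2 + s * (x - y) ^ 2 := by
    nlinarith [sq_nonneg (a * b - (s + x * y))]
  have step1P : 2 * c ^ 2 * (a * b) * (s + x * y) * (x + y) ^ 2 ≤
      c ^ 2 * (2 * (s + x * y) ^ 2 + s * (x - y) ^ 2) * (x + y) ^ 2 := by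
    have h := mul_le_mul_of_nonneg_right
      (mul_le_mul_of_nonneg_left hub (sq_nonneg c)) hP.le
    calc 2 * c ^ 2 * (a * b) * (s + x * y) * (x + y) ^ 2
        = c ^ 2 * (2 * (a * b) * (s + x * y)) * (x + y) ^ 2 := by ring
      _ ≤ c ^ 2 * (2 * (s + x * y) ^ 2 + s * (x - y) ^ 2) * (x + y) ^ 2 := h
  have step2L : (4 * (s + x * y) ^ 2 - c ^ 2 * (2 * s + x ^ 2 + y ^ 2)
      - 2 * c ^ 2 * (s + x * y)) * (x + y) ^ 2 * (s + x * y)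
      = -(s * (x - y) ^ 4 * (s + x * y)) := by
    linear_combination ((-(2 * s + x ^ 2 + y ^ 2) - 2 * (s + x * y)) * (s + x * y)) * h1
  have hp4 : 4 * (a * b) ^ 2 * ((s + x * y) * (x + y) ^ 2)
      = 4 * ((s + x * y) ^ 2 + s * (x - y) ^ 2) * (s + x * y) * (x + y) ^ 2 := by
    linear_combination (4 * ((s + x * y) * (x + y) ^ 2)) * hp
  have hcLs : c ^ 2 * (s * (x - y) ^ 2 * (x + y) ^ 2) ≤
      (s + x * y) * (s * (x - y) ^ 2 * (x + y) ^ 2) :=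
    mul_le_mul_of_nonneg_right hcL (by positivity)
  have hδlt : (x - y) ^ 2 < (x + y) ^ 2 := by nlinarith [mul_pos hx hy]
  have hδlts : s * (x - y) ^ 4 * (s + x * y) < s * (x - y) ^ 2 * (x + y) ^ 2 * (s + x * y) := by
    calc s * (x - y) ^ 4 * (s + x * y)
        = s * (x - y) ^ 2 * (x - y) ^ 2 * (s + x * y) := by ring
      _ < s * (x - y) ^ 2 * (x + y) ^ 2 * (s + x * y) :=
          mul_lt_mul_of_pos_right
            (mul_lt_mul_of_pos_left hδlt (by positivity)) hL
  have hLP : (0:ℝ) < (s + x * y) * (x + y) ^ 2 := by positivity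
  have G : 0 < 4 * (a * b) ^ 2 - 2 * c ^ 2 * (a * b) - c ^ 2 * (2 * s + x ^ 2 + y ^ 2) := by
    have Gm : 0 < (4 * (a * b) ^ 2 - 2 * c ^ 2 * (a * b) - c ^ 2 * (2 * s + x ^ 2 + y ^ 2))
        * ((s + x * y) * (x + y) ^ 2) := by
      have hpos2 : 0 < 2 * (s * (x - y) ^ 2 * ((s + x * y) * (x + y) ^ 2)) := by positivity
      linarith [step1P, step2L, hp4, hcLs, hδlts, hpos2]
    nlinarith [Gm, hLP]
  have hsq : (c * (a + b)) ^ 2 < (2 * (a * b)) ^ 2 := by nlinarith [G]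
  nlinarith [hsq, mul_pos hc0 (add_pos ha0 hb0), hp0]

lemma pointwise_ineq {s x y : ℝ} (hs : 0 < s) (hx : 0 < x) (hy : 0 < y) (hxy : x ≠ y) :
    1 / Real.sqrt (s + x ^ 2) + 1 / Real.sqrt (s + y ^ 2)
      < 2 / Real.sqrt (s + (2 * x * y / (x + y)) ^ 2) := by
  have hxy' : (0:ℝ) < x + y := by linarith
  have hm0 : 0 < 2 * x * y / (x + y) := by positivity
  have ha0 : 0 < Real.sqrt (s + x ^ 2) := Real.sqrt_pos.mpr (by positivity)
  have hb0 : 0 < Real.sqrt (s + y ^ 2) := Real.sqrt_pos.mpr (by positivity)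
  have hc0 : 0 < Real.sqrt (s + (2 * x * y / (x + y)) ^ 2) :=
    Real.sqrt_pos.mpr (by positivity)
  have ha : Real.sqrt (s + x ^ 2) ^ 2 = s + x ^ 2 := Real.sq_sqrt (by positivity)
  have hb : Real.sqrt (s + y ^ 2) ^ 2 = s + y ^ 2 := Real.sq_sqrt (by positivity)
  have hc : Real.sqrt (s + (2 * x * y / (x + y)) ^ 2) ^ 2 = s + (2 * x * y / (x + y)) ^ 2 :=
    Real.sq_sqrt (by positivity)
  have h1 : Real.sqrt (s + (2 * x * y / (x + y)) ^ 2) ^ 2 * (x + y) ^ 2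
      = s * (x + y) ^ 2 + 4 * x ^ 2 * y ^ 2 := by
    rw [hc]
    field_simp
    ring
  have key := key_ineq hs hx hy hxy ha0 hb0 hc0 ha hb h1
  rw [div_add_div _ _ (ne_of_gt ha0) (ne_of_gt hb0), div_lt_div_iff₀ (by positivity) hc0]
  nlinarith [key]

theorem stmt_6 (q : ℝ) (hq : -1 < q) (x y : ℝ) (hx : 0 < x) (hy : 0 < y) (hxy : x ≠ y) :
    (V q x + V q y) / 2 < V q (2 * x * y / (x + y)) := by
  have hxy' : (0:ℝ) < x + y := by linarith
  have hm : 0 < 2 * x * y / (x + y) := by positivity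
  have hG : 0 < Real.Gamma (q + 1) := Real.Gamma_pos_of_pos (by linarith)
  rw [V_eq q hx, V_eq q hy, V_eq q hm]
  set m : ℝ := 2 * x * y / (x + y) with hmdef
  set fx : ℝ → ℝ := fun s => Real.exp (-s) * s ^ q / Real.sqrt (s + x ^ 2) with hfx
  set fy : ℝ → ℝ := fun s => Real.exp (-s) * s ^ q / Real.sqrt (s + y ^ 2) with hfy
  set fm : ℝ → ℝ := fun s => Real.exp (-s) * s ^ q / Real.sqrt (s + m ^ 2) with hfm
  have Ix : IntegrableOn fx (Ioi 0) := Wi_integrable q hq hx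
  have Iy : IntegrableOn fy (Ioi 0) := Wi_integrable q hq hy
  have Im : IntegrableOn fm (Ioi 0) := Wi_integrable q hq hm
  set g : ℝ → ℝ := fun s => 2 * fm s - (fx s + fy s) with hg
  have hgpos : ∀ s ∈ Ioi (0:ℝ), 0 < g s := by
    intro s hs
    have hs0 : (0:ℝ) < s := hs
    have hw : 0 < Real.exp (-s) * s ^ q := by positivity
    have hpt := pointwise_ineq hs0 hx hy hxy
    have h2 : fx s + fy s < 2 * fm s := by
      have hx2 : fx s = (Real.exp (-s) * s ^ q) * (1 / Real.sqrt (s + x ^ 2)) := by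
        rw [hfx]; ring
      have hy2 : fy s = (Real.exp (-s) * s ^ q) * (1 / Real.sqrt (s + y ^ 2)) := by
        rw [hfy]; ring
      have hm2 : fm s = (Real.exp (-s) * s ^ q) * (1 / Real.sqrt (s + m ^ 2)) := by
        rw [hfm]; ring
      have h3 := mul_lt_mul_of_pos_left hpt hw
      rw [hx2, hy2, hm2]
      calc Real.exp (-s) * s ^ q * (1 / Real.sqrt (s + x ^ 2))
            + Real.exp (-s) * s ^ q * (1 / Real.sqrt (s + y ^ 2))
          = Real.exp (-s) * s ^ q *
              (1 / Real.sqrt (s + x ^ 2) + 1 / Real.sqrt (s + y ^ 2)) := by ring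
        _ < Real.exp (-s) * s ^ q * (2 / Real.sqrt (s + m ^ 2)) := h3
        _ = 2 * (Real.exp (-s) * s ^ q * (1 / Real.sqrt (s + m ^ 2))) := by ring
    show 0 < 2 * fm s - (fx s + fy s)
    linarith
  have Ig : IntegrableOn g (Ioi 0) := (Im.const_mul 2).sub (Ix.add Iy)
  have hgint : 0 < ∫ s in Ioi 0, g s := by
    rw [setIntegral_pos_iff_support_of_nonneg_ae]
    · refine lt_of_lt_of_le ?_ (measure_mono (fun s hs => ⟨ne_of_gt (hgpos s hs), hs⟩ :
        Ioi (0:ℝ) ⊆ Function.support g ∩ Ioi 0))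
      simp [Real.volume_Ioi]
    · filter_upwards [ae_restrict_mem measurableSet_Ioi] with s hs
      exact (hgpos s hs).le
    · exact Ig
  have hsplit : ∫ s in Ioi 0, g s =
      (2 * ∫ s in Ioi 0, fm s) - ((∫ s in Ioi 0, fx s) + (∫ s in Ioi 0, fy s)) := by
    have h1 : ∫ s in Ioi 0, g s =
        (∫ s in Ioi 0, 2 * fm s) - ∫ s in Ioi 0, (fx s + fy s) :=
      integral_sub (Im.const_mul 2) (Ix.add Iy)
    rw [h1, integral_add Ix Iy, integral_const_mul]
  rw [hsplit] at hgint
  have hΓ' : (0:ℝ) < 1 / Real.Gamma (q + 1) := by positivity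
  have hint : (∫ s in Ioi 0, fx s) + (∫ s in Ioi 0, fy s) < 2 * ∫ s in Ioi 0, fm s := by
    linarith
  nlinarith [mul_lt_mul_of_pos_left hint hΓ']
end
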